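/- For all nonnegative integers n, r, and s, there is a multivariate polynomial P in the 2(n+r) variables x_0, …, x_{n+r-1}, y_0, …, y_{n+r-1} with nonnegative integer coefficients such that μ_{n,r,s} = P(α_0, …, α_{n+r-1}, -conj(α_0), …, -conj(α_{n+r-1})). In particular, μ_{n,r,s} is a polynomial with integer coefficients in the quantities α_j and conj(α_j) for 0 ≤ j < n+r. -/

import Mathlib

open Polynomial LaurentPolynomial Finset

noncomputable section

/-- Extension of the Verblunsky coefficients to integer indices, with the
convention `α₋₁ = -1` (and junk value `-1` for all negative indices). -/
def az (α : ℕ → ℂ) (k : ℤ) : ℂ := if 0 ≤ k then α k.toNat else -1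

/-- The monic OPUC `Φ_n` defined by Szegő's recurrence
`Φ_{n+1}(z) = z·Φ_n(z) - conj(α_n)·Φ_n^*(z)`, where `Φ_n^*` is the reverse
polynomial `reflect n (map conj Φ_n)`. -/
def szego (α : ℕ → ℂ) : ℕ → Polynomial ℂ
  | 0 => 1
  | n + 1 =>
      Polynomial.X * szego α n -
        Polynomial.C ((starRingEnd ℂ) (α n)) *
          Polynomial.reflect n ((szego α n).map (starRingEnd ℂ))

/-- `f̄(1/z)` as a Laurent polynomial, for a polynomial `f`. -/
def polyBarInv (f : Polynomial ℂ) : LaurentPolynomial ℂ :=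
  f.sum fun k c => LaurentPolynomial.C ((starRingEnd ℂ) c) * LaurentPolynomial.T (-(k : ℤ))

/-- `f̄(1/z)` as a Laurent polynomial, for a Laurent polynomial `f`. -/
def laurentBarInv (f : LaurentPolynomial ℂ) : LaurentPolynomial ℂ :=
  Finsupp.sum f.coeff fun k c => LaurentPolynomial.C ((starRingEnd ℂ) c) * LaurentPolynomial.T (-k)

/-- The generalized moment `μ_{n,r,s} = ⟨Φ_s(z), z^n·Φ_r(z)⟩ / ⟨Φ_s(z), Φ_s(z)⟩`,
where `⟨f,g⟩ = L(f(z)·ḡ(1/z))` and `⟨Φ_s, Φ_s⟩ = ∏_{j<s} (1 - |α_j|²)`. -/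
def genMom (L : LaurentPolynomial ℂ →ₗ[ℂ] ℂ) (α : ℕ → ℂ) (n : ℤ) (r s : ℕ) : ℂ :=
  L (Polynomial.toLaurent (szego α s) *
      laurentBarInv (LaurentPolynomial.T n * Polynomial.toLaurent (szego α r))) /
    ∏ j ∈ Finset.range s, ((1 - Complex.normSq (α j) : ℝ) : ℂ)

/-- `IsLatticePath S p l q` : the list of steps `l`, starting at `p`, forms a lattice
path from `p` to `q` lying weakly above the x-axis, each step `st` taken from a
position `x` satisfying the (possibly position-dependent) step condition `S x st`. -/
def IsLatticePath (S : ℤ × ℤ → ℤ × ℤ → Prop) : ℤ × ℤ → List (ℤ × ℤ) → ℤ × ℤ → Prop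
  | p, [], q => p = q ∧ 0 ≤ p.2
  | p, st :: rest, q => 0 ≤ p.2 ∧ S p st ∧ IsLatticePath S (p + st) rest q

/-- The weight of a path: the product of the weights of its steps, where the weight
of a step may depend on its starting position. -/
def pathWeight (w : ℤ × ℤ → ℤ × ℤ → ℂ) : ℤ × ℤ → List (ℤ × ℤ) → ℂ
  | _, [] => 1
  | p, st :: rest => w p st * pathWeight w (p + st) rest

/-- Łukasiewicz steps: `(1, k)` with `k ≤ 1`. -/
def lukaStep (_p st : ℤ × ℤ) : Prop := st.1 = 1 ∧ st.2 ≤ 1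

/-- Łukasiewicz step weights: an up-step has weight `1`, and a step
`(a,b) → (a+1,b-k)` (`0 ≤ k ≤ b`) has weight
`-α_b·conj(α_{b-k-1})·∏_{j=b-k}^{b-1} (1-|α_j|²)`. -/
def wtLstep (α : ℕ → ℂ) (p st : ℤ × ℤ) : ℂ :=
  if st.2 = 1 then 1
  else
    -(az α p.2) * (starRingEnd ℂ) (az α (p.2 + st.2 - 1)) *
      ∏ j ∈ Finset.Ico (p.2 + st.2) p.2, ((1 - Complex.normSq (az α j) : ℝ) : ℂ)

/-- Gentle Motzkin steps: `(1,1)` (only at even `a+b`), `(1,0)`, `(1,-1)` (only at odd `a+b`). -/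
def gentleStep (p st : ℤ × ℤ) : Prop :=
  (st = (1, 1) ∧ Even (p.1 + p.2)) ∨ st = (1, 0) ∨ (st = (1, -1) ∧ Odd (p.1 + p.2))

/-- Gentle Motzkin step weights. -/
def wtMstep (α : ℕ → ℂ) (p st : ℤ × ℤ) : ℂ :=
  if st = (1, 1) then 1
  else if st = (1, -1) then ((1 - Complex.normSq (az α (p.2 - 1)) : ℝ) : ℂ)
  else if Even (p.1 + p.2) then az α p.2
  else -(starRingEnd ℂ) (az α (p.2 - 1))

/-- Schröder steps: `(1,1)`, `(1,0)`, `(0,-1)`. -/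
def schStep (_p st : ℤ × ℤ) : Prop := st = (1, 1) ∨ st = (1, 0) ∨ st = (0, -1)

/-- Schröder step weights. -/
def wtSstep (α : ℕ → ℂ) (p st : ℤ × ℤ) : ℂ :=
  if st = (1, 1) then 1
  else if st = (1, 0) then -((starRingEnd ℂ) (az α (p.2 - 1)) / (starRingEnd ℂ) (az α p.2))
  else
    ((starRingEnd ℂ) (az α (p.2 - 2)) / (starRingEnd ℂ) (az α (p.2 - 1))) *
      ((1 - Complex.normSq (az α (p.2 - 1)) : ℝ) : ℂ)


/-!
Write `⟨f, g⟩ = L(f · ḡ(1/z))`, a sesquilinear form on Laurent polynomials, and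
`κ_s = ∏_{j<s} (1 - |α_j|²)`. Szegő's recurrence, paired with `z^j` on either side, gives a
joint recursion for `⟨z^j, Φ_r⟩` and `⟨Φ_r, z^j⟩` whose boundary values at `j = 0` are the
defining conditions on `L`; it shows that `Φ_r` is orthogonal on both sides to `z^j` for
`0 ≤ j < r` and that `⟨z^r, Φ_r⟩ = ⟨Φ_r, z^r⟩ = κ_r`, hence `μ_{0,r,s} = δ_{rs}`.

Let `μ^*_{n,r,s}` be the moment with `Φ_r^*` in place of `Φ_r`. The identities
`z Φ_r = Φ_{r+1} + conj(α_r) Φ_r^*` and `Φ_{r+1}^* = (1 - |α_r|²) Φ_r^* - α_r Φ_{r+1}` give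
`μ_{n+1,r,s} = μ_{n,r+1,s} + α_r μ^*_{n,r,s}`,
`μ^*_{n,r+1,s} = (1 + α_r · (-conj α_r)) μ^*_{n,r,s} + (-conj α_r) μ_{n,r+1,s}` and
`μ^*_{n,0,s} = μ_{n,0,s}`. All coefficients are sums of products of the `α_j` and `-conj α_j`
with `j < n + r`, so induction on `n`, and for `μ^*` on `r`, proves the theorem.
-/
def barInv : LaurentPolynomial ℂ →+* LaurentPolynomial ℂ :=
  (invert : LaurentPolynomial ℂ ≃ₐ[ℂ] LaurentPolynomial ℂ).toRingHom.comp
    (AddMonoidAlgebra.mapRingHom ℤ (starRingEnd ℂ))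

@[simp]
lemma barInv_C_mul_T (a : ℂ) (n : ℤ) :
    barInv (LaurentPolynomial.C a * T n) = LaurentPolynomial.C ((starRingEnd ℂ) a) * T (-n) := by
  rw [barInv, RingHom.comp_apply, ← single_eq_C_mul_T, AddMonoidAlgebra.mapRingHom_single,
    single_eq_C_mul_T]
  simp

@[simp]
lemma barInv_C (a : ℂ) :
    barInv (LaurentPolynomial.C a) = LaurentPolynomial.C ((starRingEnd ℂ) a) := by
  simpa using barInv_C_mul_T a 0

@[simp]
lemma barInv_T (n : ℤ) : barInv (T n) = T (-n) := by
  simpa using barInv_C_mul_T 1 n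

@[simp]
lemma barInv_barInv (f : LaurentPolynomial ℂ) : barInv (barInv f) = f := by
  induction f using LaurentPolynomial.induction_on' with
  | add p q hp hq => rw [map_add, map_add, hp, hq]
  | C_mul_T n a => simp

lemma laurentBarInv_eq_barInv (f : LaurentPolynomial ℂ) : laurentBarInv f = barInv f := by
  conv_rhs => rw [← AddMonoidAlgebra.sum_coeff_single f]
  rw [laurentBarInv, map_finsuppSum]
  simp only [single_eq_C_mul_T, barInv_C_mul_T]

lemma polyBarInv_eq_barInv (p : ℂ[X]) : polyBarInv p = barInv (toLaurent p) := by
  conv_rhs => rw [← p.sum_monomial_eq]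
  rw [polyBarInv, Polynomial.sum_def, Polynomial.sum_def, map_sum, map_sum]
  refine Finset.sum_congr rfl fun k _ => ?_
  rw [← C_mul_X_pow_eq_monomial, Polynomial.toLaurent_C_mul_X_pow, barInv_C_mul_T]

lemma toLaurent_reflect_map_conj {p : ℂ[X]} {N : ℕ} (hp : p.natDegree ≤ N) :
    toLaurent (reflect N (p.map (starRingEnd ℂ))) = T N * barInv (toLaurent p) := by
  refine Polynomial.induction_with_natDegree_le
    (fun p => toLaurent (reflect N (p.map (starRingEnd ℂ))) = T N * barInv (toLaurent p)) N
    (by simp) (fun n a _ hn => ?_) (fun p q _ _ hp hq => ?_) p hp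
  · rw [Polynomial.map_mul, Polynomial.map_pow, map_C, Polynomial.map_X, reflect_C_mul_X_pow,
      revAt_le hn, Polynomial.toLaurent_C_mul_X_pow, Polynomial.toLaurent_C_mul_X_pow,
      barInv_C_mul_T, Nat.cast_sub hn, T_sub]
    ring
  · rw [Polynomial.map_add, reflect_add, map_add, hp, hq, map_add, map_add, mul_add]

lemma LaurentPolynomial.linearMap_C_mul {R : Type*} [CommSemiring R] (L : R[T;T⁻¹] →ₗ[R] R)
    (a : R) (f : R[T;T⁻¹]) : L (LaurentPolynomial.C a * f) = a * L f := by
  rw [← LaurentPolynomial.smul_eq_C_mul, map_smul, smul_eq_mul]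

def pairing (L : LaurentPolynomial ℂ →ₗ[ℂ] ℂ) :
    LaurentPolynomial ℂ →ₗ[ℂ] LaurentPolynomial ℂ →ₗ⋆[ℂ] ℂ :=
  LinearMap.mk₂'ₛₗ (RingHom.id ℂ) (starRingEnd ℂ) (fun f g => L (f * barInv g))
    (fun f₁ f₂ g => by rw [add_mul, map_add])
    (fun c f g => by
      rw [LaurentPolynomial.smul_eq_C_mul, mul_assoc, linearMap_C_mul L, RingHom.id_apply,
        smul_eq_mul])
    (fun f g₁ g₂ => by rw [map_add, mul_add, map_add])
    (fun c f g => by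
      rw [LaurentPolynomial.smul_eq_C_mul, map_mul barInv, barInv_C, mul_left_comm,
        linearMap_C_mul L, smul_eq_mul])

lemma pairing_apply (L : LaurentPolynomial ℂ →ₗ[ℂ] ℂ) (f g : LaurentPolynomial ℂ) :
    pairing L f g = L (f * barInv g) := rfl

lemma pairing_C_mul_right (L : LaurentPolynomial ℂ →ₗ[ℂ] ℂ) (a : ℂ)
    (f g : LaurentPolynomial ℂ) :
    pairing L f (LaurentPolynomial.C a * g) = (starRingEnd ℂ) a * pairing L f g := by
  rw [← LaurentPolynomial.smul_eq_C_mul, map_smulₛₗ, smul_eq_mul]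

section Szego

variable (α : ℕ → ℂ)

lemma natDegree_szego_le (n : ℕ) : (szego α n).natDegree ≤ n := by
  induction n with
  | zero => simp [szego]
  | succ n ih =>
    refine (natDegree_sub_le _ _).trans (max_le ?_ ?_)
    · exact natDegree_mul_le.trans (by rw [natDegree_X]; omega)
    · refine natDegree_mul_le.trans ?_
      rw [natDegree_C, zero_add]
      exact (natDegree_reflect_le.trans (max_le le_rfl (natDegree_map_le.trans ih))).trans
        n.le_succ

lemma coeff_szego_self (n : ℕ) : (szego α n).coeff n = 1 := by
  induction n with
  | zero => simp [szego]
  | succ n ih =>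
    have hstar : (reflect n ((szego α n).map (starRingEnd ℂ))).coeff (n + 1) = 0 :=
      coeff_eq_zero_of_natDegree_lt <| natDegree_reflect_le.trans_lt <|
        max_lt n.lt_succ_self
          ((natDegree_map_le.trans (natDegree_szego_le α n)).trans_lt n.lt_succ_self)
    rw [szego, coeff_sub, coeff_X_mul, ih, coeff_C_mul, hstar, mul_zero, sub_zero]

lemma degree_szego_sub_X_pow_lt (n : ℕ) : (szego α n - X ^ n).degree < (n : WithBot ℕ) := by
  rw [degree_lt_iff_coeff_zero]
  intro m hm
  rcases hm.lt_or_eq with hm | rfl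
  · rw [coeff_sub, coeff_X_pow, if_neg hm.ne',
      coeff_eq_zero_of_natDegree_lt ((natDegree_szego_le α n).trans_lt hm), sub_zero]
  · rw [coeff_sub, coeff_szego_self, coeff_X_pow_self, sub_self]

def szegoLaurent (n : ℕ) : LaurentPolynomial ℂ := toLaurent (szego α n)

def szegoStar (n : ℕ) : LaurentPolynomial ℂ := T n * barInv (szegoLaurent α n)

lemma szegoLaurent_zero : szegoLaurent α 0 = 1 := by
  simp [szegoLaurent, szego]

lemma szegoStar_zero : szegoStar α 0 = 1 := by
  simp [szegoStar, szegoLaurent_zero]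

lemma szegoLaurent_succ (n : ℕ) :
    szegoLaurent α (n + 1) =
      T 1 * szegoLaurent α n
        - LaurentPolynomial.C ((starRingEnd ℂ) (α n)) * szegoStar α n := by
  rw [szegoLaurent, szego, map_sub, map_mul, map_mul,
    toLaurent_reflect_map_conj (natDegree_szego_le α n), Polynomial.toLaurent_X,
    Polynomial.toLaurent_C]
  rfl

lemma T_one_mul_szegoLaurent (n : ℕ) :
    T 1 * szegoLaurent α n =
      szegoLaurent α (n + 1)
        + LaurentPolynomial.C ((starRingEnd ℂ) (α n)) * szegoStar α n := by
  rw [szegoLaurent_succ]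
  ring

lemma barInv_szegoLaurent_succ (n : ℕ) :
    barInv (szegoLaurent α (n + 1)) =
      T (-1) * barInv (szegoLaurent α n)
        - LaurentPolynomial.C (α n) * (T (-n) * szegoLaurent α n) := by
  rw [szegoLaurent_succ, szegoStar]
  simp only [map_sub, map_mul, barInv_T, barInv_C, Complex.conj_conj, barInv_barInv]

lemma szegoStar_succ (n : ℕ) :
    szegoStar α (n + 1) =
      LaurentPolynomial.C (1 - α n * (starRingEnd ℂ) (α n)) * szegoStar α n
        - LaurentPolynomial.C (α n) * szegoLaurent α (n + 1) := by
  have hstar : szegoStar α (n + 1) =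
      szegoStar α n - LaurentPolynomial.C (α n) * (T 1 * szegoLaurent α n) := by
    rw [szegoStar, barInv_szegoLaurent_succ, szegoStar, mul_sub, ← mul_assoc, ← T_add,
      mul_left_comm, ← mul_assoc (T _), ← T_add]
    push_cast
    ring_nf
  rw [hstar, T_one_mul_szegoLaurent, map_sub, map_one, map_mul]
  ring

def szegoNormSq (s : ℕ) : ℂ :=
  ∏ j ∈ Finset.range s, ((1 - Complex.normSq (α j) : ℝ) : ℂ)

lemma szegoNormSq_succ (s : ℕ) :
    szegoNormSq α (s + 1) = szegoNormSq α s * (1 - α s * (starRingEnd ℂ) (α s)) := by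
  rw [szegoNormSq, prod_range_succ, Complex.ofReal_sub, Complex.ofReal_one, Complex.mul_conj]
  rfl

variable {α} in
lemma szegoNormSq_ne_zero (hα : ∀ k, ‖α k‖ < 1) (s : ℕ) : szegoNormSq α s ≠ 0 := by
  refine prod_ne_zero_iff.mpr fun j _ => Complex.ofReal_ne_zero.mpr (sub_ne_zero.mpr ?_)
  rw [Complex.normSq_eq_norm_sq]
  exact (pow_lt_one₀ (norm_nonneg _) (hα j) two_ne_zero).ne'

variable (L : LaurentPolynomial ℂ →ₗ[ℂ] ℂ)

lemma pairing_T_szegoLaurent_succ (r : ℕ) (j : ℤ) :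
    pairing L (T j) (szegoLaurent α (r + 1)) =
      pairing L (T (j - 1)) (szegoLaurent α r)
        - α r * pairing L (szegoLaurent α r) (T (r - j)) := by
  simp only [pairing_apply, barInv_szegoLaurent_succ, barInv_T]
  simp only [neg_sub, T_sub]
  rw [← linearMap_C_mul L, ← map_sub]
  ring_nf

lemma pairing_szegoLaurent_succ_T (r : ℕ) (j : ℤ) :
    pairing L (szegoLaurent α (r + 1)) (T j) =
      pairing L (szegoLaurent α r) (T (j - 1))
        - (starRingEnd ℂ) (α r) * pairing L (T (r - j)) (szegoLaurent α r) := by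
  simp only [pairing_apply, szegoLaurent_succ, szegoStar, barInv_T]
  simp only [neg_sub, T_sub]
  rw [← linearMap_C_mul L, ← map_sub]
  ring_nf

end Szego

lemma Polynomial.map_eq_zero_of_degree_lt {R S M : Type*} [Semiring R] [Semiring S]
    [AddCommMonoid M] [Module S M] {σ : R →+* S} (f : R[X] →ₛₗ[σ] M) {r : ℕ}
    (hf : ∀ k < r, f (X ^ k) = 0) {p : R[X]} (hp : p.degree < r) : f p = 0 := by
  classical
  have hker : degreeLT R r ≤ LinearMap.ker f := by
    rw [degreeLT_eq_span_X_pow, Submodule.span_le, Finset.coe_image, Set.image_subset_iff]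
    exact fun k hk => hf k (Finset.mem_range.mp hk)
  exact hker (mem_degreeLT.mpr hp)

structure IsMomentFunctional (α : ℕ → ℂ) (L : LaurentPolynomial ℂ →ₗ[ℂ] ℂ) : Prop where
  apply_one : L 1 = 1
  apply_szego : ∀ k : ℕ, 1 ≤ k → L (Polynomial.toLaurent (szego α k)) = 0
  apply_polyBarInv_szego : ∀ k : ℕ, 1 ≤ k → L (polyBarInv (szego α k)) = 0

namespace IsMomentFunctional

variable {α : ℕ → ℂ} {L : LaurentPolynomial ℂ →ₗ[ℂ] ℂ} (hL : IsMomentFunctional α L)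
include hL

lemma pairing_T_zero_szegoLaurent {k : ℕ} (hk : 1 ≤ k) :
    pairing L (T 0) (szegoLaurent α k) = 0 := by
  rw [pairing_apply, T_zero, one_mul, szegoLaurent, ← polyBarInv_eq_barInv,
    hL.apply_polyBarInv_szego k hk]

lemma pairing_szegoLaurent_T_zero {k : ℕ} (hk : 1 ≤ k) :
    pairing L (szegoLaurent α k) (T 0) = 0 := by
  rw [pairing_apply, T_zero, map_one, mul_one, szegoLaurent, hL.apply_szego k hk]

theorem pairing_T_szegoLaurent (r : ℕ) :
    (∀ j : ℤ, 0 ≤ j → j < r →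
      pairing L (T j) (szegoLaurent α r) = 0 ∧ pairing L (szegoLaurent α r) (T j) = 0) ∧
    pairing L (T r) (szegoLaurent α r) = szegoNormSq α r ∧
      pairing L (szegoLaurent α r) (T r) = szegoNormSq α r := by
  induction r with
  | zero =>
    refine ⟨fun j _ _ => by omega, ?_⟩
    simp [pairing_apply, szegoLaurent_zero, hL.apply_one, szegoNormSq]
  | succ r ih =>
    obtain ⟨hlow, hA, hB⟩ := ih
    have hA₀ := hL.pairing_T_zero_szegoLaurent (Nat.le_add_left 1 r)
    have hB₀ := hL.pairing_szegoLaurent_T_zero (Nat.le_add_left 1 r)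
    rw [pairing_T_szegoLaurent_succ, zero_sub, sub_zero, hB] at hA₀
    rw [pairing_szegoLaurent_succ_T, zero_sub, sub_zero, hA] at hB₀
    refine ⟨fun j hj hjr => ?_, ?_, ?_⟩
    · rcases hj.eq_or_lt with rfl | hj
      · exact ⟨hL.pairing_T_zero_szegoLaurent (Nat.le_add_left 1 r),
          hL.pairing_szegoLaurent_T_zero (Nat.le_add_left 1 r)⟩
      have h₁ := hlow (j - 1) (by omega) (by omega)
      have h₂ := hlow (r - j) (by omega) (by omega)
      rw [pairing_T_szegoLaurent_succ, pairing_szegoLaurent_succ_T, h₁.1, h₁.2, h₂.1, h₂.2]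
      simp
    · rw [pairing_T_szegoLaurent_succ, Nat.cast_succ, add_sub_cancel_right,
        sub_add_cancel_left, hA, szegoNormSq_succ]
      linear_combination -α r * hB₀
    · rw [pairing_szegoLaurent_succ_T, Nat.cast_succ, add_sub_cancel_right,
        sub_add_cancel_left, hB, szegoNormSq_succ]
      linear_combination -(starRingEnd ℂ) (α r) * hA₀

lemma pairing_toLaurent_szegoLaurent {p : ℂ[X]} {r : ℕ} (hp : p.degree < r) :
    pairing L (toLaurent p) (szegoLaurent α r) = 0 := by
  refine Polynomial.map_eq_zero_of_degree_lt
    (((pairing L).flip (szegoLaurent α r)).comp toLaurentAlg.toLinearMap) (fun k hk => ?_) hp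
  simpa using ((hL.pairing_T_szegoLaurent r).1 k (by omega) (by omega)).1

lemma pairing_szegoLaurent_toLaurent {p : ℂ[X]} {r : ℕ} (hp : p.degree < r) :
    pairing L (szegoLaurent α r) (toLaurent p) = 0 := by
  refine Polynomial.map_eq_zero_of_degree_lt
    ((pairing L (szegoLaurent α r)).comp toLaurentAlg.toLinearMap) (fun k hk => ?_) hp
  simpa using ((hL.pairing_T_szegoLaurent r).1 k (by omega) (by omega)).2

theorem pairing_szegoLaurent_szegoLaurent (r s : ℕ) :
    pairing L (szegoLaurent α s) (szegoLaurent α r) = if r = s then szegoNormSq α s else 0 := by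
  rcases lt_trichotomy r s with h | rfl | h
  · rw [if_neg h.ne]
    exact hL.pairing_szegoLaurent_toLaurent
      ((degree_le_of_natDegree_le (natDegree_szego_le α r)).trans_lt (by exact_mod_cast h))
  · have hsplit : szegoLaurent α r = toLaurent (szego α r - X ^ r) + T r := by
      rw [szegoLaurent, map_sub, Polynomial.toLaurent_X_pow, sub_add_cancel]
    nth_rw 2 [hsplit]
    rw [if_pos rfl, map_add, hL.pairing_szegoLaurent_toLaurent (degree_szego_sub_X_pow_lt α r),
      zero_add]
    exact (hL.pairing_T_szegoLaurent r).2.2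
  · rw [if_neg h.ne']
    exact hL.pairing_toLaurent_szegoLaurent
      ((degree_le_of_natDegree_le (natDegree_szego_le α s)).trans_lt (by exact_mod_cast h))

end IsMomentFunctional

def moment (L : LaurentPolynomial ℂ →ₗ[ℂ] ℂ) (α : ℕ → ℂ) (n r s : ℕ) : ℂ :=
  pairing L (szegoLaurent α s) (T n * szegoLaurent α r) / szegoNormSq α s

def momentStar (L : LaurentPolynomial ℂ →ₗ[ℂ] ℂ) (α : ℕ → ℂ) (n r s : ℕ) : ℂ :=
  pairing L (szegoLaurent α s) (T n * szegoStar α r) / szegoNormSq α s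

section Moments

variable (L : LaurentPolynomial ℂ →ₗ[ℂ] ℂ) (α : ℕ → ℂ)

lemma genMom_eq_moment (n r s : ℕ) : genMom L α n r s = moment L α n r s := by
  rw [genMom, laurentBarInv_eq_barInv]
  rfl

variable {L α} in
lemma IsMomentFunctional.moment_zero (hL : IsMomentFunctional α L) (hα : ∀ k, ‖α k‖ < 1)
    (r s : ℕ) : moment L α 0 r s = if r = s then 1 else 0 := by
  rw [moment, Nat.cast_zero, T_zero, one_mul, hL.pairing_szegoLaurent_szegoLaurent]
  split_ifs
  · exact div_self (szegoNormSq_ne_zero hα s)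
  · exact zero_div _

lemma moment_succ (n r s : ℕ) :
    moment L α (n + 1) r s = moment L α n (r + 1) s + α r * momentStar L α n r s := by
  rw [moment, Nat.cast_succ, T_add, mul_assoc, T_one_mul_szegoLaurent, mul_add, mul_left_comm,
    map_add, pairing_C_mul_right, Complex.conj_conj, add_div, mul_div_assoc]
  rfl

lemma momentStar_eq_moment_zero (n s : ℕ) : momentStar L α n 0 s = moment L α n 0 s := by
  rw [momentStar, moment, szegoStar_zero, szegoLaurent_zero]

lemma momentStar_succ (n r s : ℕ) :
    momentStar L α n (r + 1) s =
      (1 - α r * (starRingEnd ℂ) (α r)) * momentStar L α n r s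
        - (starRingEnd ℂ) (α r) * moment L α n (r + 1) s := by
  rw [momentStar, szegoStar_succ, mul_sub, mul_left_comm, mul_left_comm (T _), map_sub,
    pairing_C_mul_right, pairing_C_mul_right, sub_div, mul_div_assoc, mul_div_assoc]
  simp only [map_sub, map_one, map_mul, Complex.conj_conj, mul_comm ((starRingEnd ℂ) (α r))]
  rfl

end Moments

/-- By `MvPolynomial.aeval_range`, the values at `(α_j)_{j<N}, (-conj α_j)_{j<N}` of polynomials
with coefficients in `ℕ`. -/
def verblunskyAlgebra (α : ℕ → ℂ) (N : ℕ) : Subalgebra ℕ ℂ :=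
  Algebra.adjoin ℕ (Set.range (Sum.elim (fun i : Fin N => α i)
    (fun i : Fin N => -(starRingEnd ℂ) (α i))))

section VerblunskyAlgebra

variable {α : ℕ → ℂ} {N : ℕ}

lemma verblunskyAlgebra_mono {M : ℕ} (h : N ≤ M) :
    verblunskyAlgebra α N ≤ verblunskyAlgebra α M := by
  refine Algebra.adjoin_mono ?_
  rintro _ ⟨i | i, rfl⟩
  exacts [⟨Sum.inl (Fin.castLE h i), rfl⟩, ⟨Sum.inr (Fin.castLE h i), rfl⟩]

lemma mem_verblunskyAlgebra {j : ℕ} (h : j < N) : α j ∈ verblunskyAlgebra α N :=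
  Algebra.subset_adjoin ⟨Sum.inl ⟨j, h⟩, rfl⟩

lemma neg_conj_mem_verblunskyAlgebra {j : ℕ} (h : j < N) :
    -(starRingEnd ℂ) (α j) ∈ verblunskyAlgebra α N :=
  Algebra.subset_adjoin ⟨Sum.inr ⟨j, h⟩, rfl⟩

lemma momentStar_mem_verblunskyAlgebra {L : LaurentPolynomial ℂ →ₗ[ℂ] ℂ} {n s : ℕ}
    (hmom : ∀ r, moment L α n r s ∈ verblunskyAlgebra α (n + r)) (r : ℕ) :
    momentStar L α n r s ∈ verblunskyAlgebra α (n + r) := by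
  induction r with
  | zero => rw [momentStar_eq_moment_zero]; exact hmom 0
  | succ r ih =>
    have hα := mem_verblunskyAlgebra (α := α) (show r < n + (r + 1) by omega)
    have hα' := neg_conj_mem_verblunskyAlgebra (α := α) (show r < n + (r + 1) by omega)
    rw [momentStar_succ, sub_eq_add_neg, ← neg_mul, sub_eq_add_neg, ← mul_neg]
    exact add_mem (mul_mem (add_mem (one_mem _) (mul_mem hα hα'))
      (verblunskyAlgebra_mono (by omega) ih)) (mul_mem hα' (hmom (r + 1)))

lemma IsMomentFunctional.moment_mem_verblunskyAlgebra {L : LaurentPolynomial ℂ →ₗ[ℂ] ℂ}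
    (hL : IsMomentFunctional α L) (hα : ∀ k, ‖α k‖ < 1) (n r s : ℕ) :
    moment L α n r s ∈ verblunskyAlgebra α (n + r) := by
  induction n generalizing r with
  | zero =>
    rw [hL.moment_zero hα]
    split_ifs
    exacts [one_mem _, zero_mem _]
  | succ n ih =>
    rw [moment_succ]
    exact add_mem (verblunskyAlgebra_mono (by omega) (ih (r + 1)))
      (mul_mem (mem_verblunskyAlgebra (by omega))
        (verblunskyAlgebra_mono (by omega) (momentStar_mem_verblunskyAlgebra ih r)))

end VerblunskyAlgebra

/-- a generalized version of Verblunsky's formula: `μ_{n,r,s}` is a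
polynomial with nonnegative integer coefficients in the `2(n+r)` quantities
`α_0, …, α_{n+r-1}, -conj(α_0), …, -conj(α_{n+r-1})`. -/
theorem genMom_polynomiality (α : ℕ → ℂ) (hα : ∀ k, ‖α k‖ < 1)
    (L : LaurentPolynomial ℂ →ₗ[ℂ] ℂ) (hL1 : L 1 = 1)
    (hLphi : ∀ k : ℕ, 1 ≤ k → L (Polynomial.toLaurent (szego α k)) = 0)
    (hLbar : ∀ k : ℕ, 1 ≤ k → L (polyBarInv (szego α k)) = 0)
    (n r s : ℕ) :
    ∃ P : MvPolynomial (Fin (n + r) ⊕ Fin (n + r)) ℕ,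
      genMom L α n r s =
        MvPolynomial.eval₂ (Nat.castRingHom ℂ)
          (Sum.elim (fun i : Fin (n + r) => α (i : ℕ))
            (fun i : Fin (n + r) => -(starRingEnd ℂ) (α (i : ℕ)))) P := by
  have hmem := IsMomentFunctional.moment_mem_verblunskyAlgebra ⟨hL1, hLphi, hLbar⟩ hα n r s
  rw [verblunskyAlgebra, ← MvPolynomial.aeval_range] at hmem
  obtain ⟨P, hP⟩ := hmem
  exact ⟨P, by rw [genMom_eq_moment, ← hP]; rfl⟩


end
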